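/- arXiv:math/9801016 — 3 statements merged into one kernel-verified Lean document; each statement's English description precedes it below -/
import Mathlib

section
/- For vector compositions: define d(n) = Σ over sequences ([a_1,b_1],...,[a_r,b_r]) of pairs of positive integers with 2Σ(a_i+b_i) = n, of ∏_{i=1}^{r-1}(a_i+a_{i+1}-1)(b_i+b_{i+1}-1). Then the generating function Σ_n d(n) t^n is a rational function of t. -/
open PowerSeries

/-- Generating function for vector compositions: `d(n)` sums, over all nonempty
sequences `([a₁,b₁],…,[a_r,b_r])` of pairs of positive integers with
`2Σ(aᵢ+bᵢ) = n`, the product `∏_{i<r}(aᵢ+aᵢ₊₁-1)(bᵢ+bᵢ₊₁-1)`.  A sequence of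
pairs is encoded as a pair of equal-length compositions. -/
noncomputable def vecGF : PowerSeries ℤ :=
  PowerSeries.mk fun n =>
    ∑ m₁ ∈ Finset.Icc 1 n, ∑ m₂ ∈ Finset.Icc 1 n,
      ∑ c₁ : Composition m₁, ∑ c₂ : Composition m₂,
        if c₁.length = c₂.length ∧ 2 * (m₁ + m₂) = n then
          (((c₁.blocks.zip c₂.blocks).zip (c₁.blocks.zip c₂.blocks).tail).map
            fun q => ((q.1.1 : ℤ) + q.2.1 - 1) * ((q.1.2 : ℤ) + q.2.2 - 1)).prod
        else 0

section VecGFAux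
open Finset

variable {M : Type*} [AddCommMonoid M]

/-- finset of positive-entry lists summing to m -/
def Lset : ℕ → Finset (List ℕ)
  | 0 => {[]}
  | (m+1) => (Finset.Icc 1 (m+1)).attach.biUnion
      (fun k => (Lset (m+1-k.1)).image (k.1 :: ·))
decreasing_by
  have := (Finset.mem_Icc.mp k.2).1
  omega

lemma mem_Lset {m : ℕ} {l : List ℕ} :
    l ∈ Lset m ↔ l.sum = m ∧ ∀ x ∈ l, 0 < x := by
  induction m using Nat.strong_induction_on generalizing l with
  | _ m ih =>
    match m with
    | 0 =>
      simp only [Lset, Finset.mem_singleton]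
      constructor
      · rintro rfl; simp
      · rintro ⟨h1, h2⟩
        cases l with
        | nil => rfl
        | cons a t =>
          exfalso
          have := h2 a (by simp)
          simp [List.sum_cons] at h1; omega
    | (m+1) =>
      simp only [Lset, Finset.mem_biUnion, Finset.mem_image, Finset.mem_attach]
      constructor
      · rintro ⟨⟨k, hk⟩, -, l', hl', rfl⟩
        rw [Finset.mem_Icc] at hk
        have h := (ih (m+1-k) (by omega)).mp hl'
        constructor
        · simp [List.sum_cons, h.1]; omega
        · intro x hx
          rcases List.mem_cons.mp hx with rfl | hx
          · omega
          · exact h.2 x hx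
      · rintro ⟨h1, h2⟩
        cases l with
        | nil => simp at h1
        | cons a t =>
          have ha : 0 < a := h2 a (by simp)
          have hale : a ≤ m + 1 := by simp [List.sum_cons] at h1; omega
          exact ⟨⟨a, Finset.mem_Icc.mpr ⟨ha, hale⟩⟩, trivial, t,
            (ih (m+1-a) (by omega)).mpr ⟨by simp [List.sum_cons] at h1; omega,
            fun x hx => h2 x (List.mem_cons_of_mem _ hx)⟩, rfl⟩

lemma sum_Lset_succ (m : ℕ) (f : List ℕ → M) :
    ∑ l ∈ Lset (m+1), f l = ∑ k ∈ Finset.Icc 1 (m+1), ∑ l ∈ Lset (m+1-k), f (k :: l) := by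
  rw [Lset, Finset.sum_biUnion]
  · rw [← Finset.sum_attach (Finset.Icc 1 (m+1))
      (fun k => ∑ l ∈ Lset (m+1-k), f (k :: l))]
    refine Finset.sum_congr rfl fun k _ => ?_
    rw [Finset.sum_image]
    intro x _ y _ h
    simpa using h
  · intro k _ k' _ hkk'
    refine Finset.disjoint_left.mpr fun l hl hl' => ?_
    simp only [Finset.mem_image] at hl hl'
    obtain ⟨x, -, rfl⟩ := hl
    obtain ⟨y, -, h⟩ := hl'
    apply hkk'
    have : k'.1 = k.1 := (List.cons.injEq _ _ _ _).mp h |>.1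
    exact Subtype.ext this.symm

lemma sum_composition (m : ℕ) (f : List ℕ → M) :
    ∑ c : Composition m, f c.blocks = ∑ l ∈ Lset m, f l := by
  apply Finset.sum_bij (fun c _ => c.blocks)
  · exact fun c _ => mem_Lset.mpr ⟨c.blocks_sum, fun x hx => c.blocks_pos hx⟩
  · intro c _ c' _ h
    exact Composition.ext h
  · intro l hl
    exact ⟨⟨l, fun hi => (mem_Lset.mp hl).2 _ hi, (mem_Lset.mp hl).1⟩, Finset.mem_univ _, rfl⟩
  · intro c _
    rfl

def Wt (l₁ l₂ : List ℕ) : ℤ :=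
  (((l₁.zip l₂).zip (l₁.zip l₂).tail).map
    fun q => ((q.1.1 : ℤ) + q.2.1 - 1) * ((q.1.2 : ℤ) + q.2.2 - 1)).prod

lemma Wt_single (a b : ℕ) : Wt [a] [b] = 1 := by simp [Wt]

lemma Wt_cons {l₁ l₂ : List ℕ} (a b : ℕ) (h₁ : l₁ ≠ []) (h₂ : l₂ ≠ []) :
    Wt (a::l₁) (b::l₂) =
      ((a:ℤ) + l₁.headI - 1) * ((b:ℤ) + l₂.headI - 1) * Wt l₁ l₂ := by
  match l₁, l₂ with
  | a'::r₁, b'::r₂ => simp [Wt]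

def PF (m : ℕ) : Finset (List ℕ × List ℕ) :=
  ((Finset.range (m+1)).biUnion (fun m₁ => (Lset m₁) ×ˢ (Lset (m - m₁)))).filter
    (fun p => p.1.length = p.2.length ∧ p.1 ≠ [])

lemma mem_PF {m : ℕ} {p : List ℕ × List ℕ} :
    p ∈ PF m ↔ p.1.sum + p.2.sum = m ∧ (∀ x ∈ p.1, 0 < x) ∧ (∀ x ∈ p.2, 0 < x)
      ∧ p.1.length = p.2.length ∧ p.1 ≠ [] := by
  simp only [PF, Finset.mem_filter, Finset.mem_biUnion, Finset.mem_range,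
    Finset.mem_product, mem_Lset]
  constructor
  · rintro ⟨⟨m₁, hm₁, ⟨hs1, hp1⟩, hs2, hp2⟩, hlen, hne⟩
    exact ⟨by omega, hp1, hp2, hlen, hne⟩
  · rintro ⟨hsum, hp1, hp2, hlen, hne⟩
    exact ⟨⟨p.1.sum, by omega, ⟨rfl, hp1⟩, by omega, hp2⟩, hlen, hne⟩

def S (φ : ℕ → ℕ → ℤ) (m : ℕ) : ℤ :=
  ∑ p ∈ PF m, φ p.1.headI p.2.headI * Wt p.1 p.2

lemma S_small (φ : ℕ → ℕ → ℤ) {m : ℕ} (hm : m < 2) : S φ m = 0 := by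
  refine Finset.sum_eq_zero fun p hp => ?_
  exfalso
  obtain ⟨hsum, hp1, hp2, hlen, hne⟩ := mem_PF.mp hp
  match h : p.1, h2 : p.2 with
  | [], _ => exact hne h
  | a::t, [] => rw [h, h2] at hlen; simp at hlen
  | a::t, b::t2 =>
    have ha := hp1 a (by rw [h]; simp)
    have hb := hp2 b (by rw [h2]; simp)
    rw [h, h2] at hsum
    simp [List.sum_cons] at hsum
    omega

-- basis functions
def fone : ℕ → ℕ → ℤ := fun _ _ => 1
def fA : ℕ → ℕ → ℤ := fun a _ => (a:ℤ) - 1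
def fB : ℕ → ℕ → ℤ := fun _ b => (b:ℤ) - 1
def fAB : ℕ → ℕ → ℤ := fun a b => ((a:ℤ) - 1) * ((b:ℤ) - 1)
def cab : ℕ → ℕ → ℤ := fun a b => (a:ℤ) * (b:ℤ)
def ca : ℕ → ℕ → ℤ := fun a _ => (a:ℤ)
def cb : ℕ → ℕ → ℤ := fun _ b => (b:ℤ)

def Nc (φ : ℕ → ℕ → ℤ) (m : ℕ) : ℤ := ∑ a ∈ Finset.Icc 1 (m-1), φ a (m-a)
def Kc (φ c : ℕ → ℕ → ℤ) (j : ℕ) : ℤ :=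
  ∑ a ∈ Finset.Icc 1 (j-1), φ a (j-a) * c a (j-a)

lemma mem_PF_single {m : ℕ} {p : List ℕ × List ℕ} (hp : p ∈ PF m)
    (ht : p.1.tail = []) : ∃ a b, 1 ≤ a ∧ 1 ≤ b ∧ a + b = m ∧ p = ([a], [b]) := by
  obtain ⟨hsum, hp1, hp2, hlen, hne⟩ := mem_PF.mp hp
  obtain ⟨l₁, l₂⟩ := p
  match l₁, l₂ with
  | [], _ => exact absurd rfl hne
  | [a], [b] =>
    exact ⟨a, b, hp1 a (by simp), hp2 b (by simp), by simpa using hsum, rfl⟩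
  | [a], [] => simp at hlen
  | [a], b::c::t => simp at hlen
  | a::c::t, l₂ => simp at ht

lemma mem_PF_cons {m : ℕ} {p : List ℕ × List ℕ} (hp : p ∈ PF m)
    (ht : p.1.tail ≠ []) :
    1 ≤ p.1.headI ∧ p.1.headI ≤ m ∧ 1 ≤ p.2.headI ∧ p.2.headI ≤ m ∧
      (p.1.tail, p.2.tail) ∈ PF (m - p.1.headI - p.2.headI) ∧
      p.1 = p.1.headI :: p.1.tail ∧ p.2 = p.2.headI :: p.2.tail ∧
      p.1.headI + p.2.headI ≤ m ∧ p.2.tail ≠ [] := by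
  obtain ⟨hsum, hp1, hp2, hlen, hne⟩ := mem_PF.mp hp
  obtain ⟨l₁, l₂⟩ := p
  match l₁, l₂ with
  | [], _ => exact absurd rfl hne
  | a::t₁, [] => simp at hlen
  | a::t₁, b::t₂ =>
    simp only [List.headI, List.tail_cons] at *
    have ha := hp1 a (by simp)
    have hb := hp2 b (by simp)
    simp only [List.sum_cons] at hsum
    have ht₂ : t₂ ≠ [] := by
      intro h
      rw [h] at hlen
      simp at hlen
      exact ht (by simpa using hlen)
    have htsum : t₁.sum + t₂.sum = m - a - b := by omega
    refine ⟨ha, by omega, hb, by omega, ?_, trivial, trivial, by omega, ht₂⟩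
    exact mem_PF.mpr ⟨htsum, fun x hx => hp1 x (by simp [hx]),
      fun x hx => hp2 x (by simp [hx]), by simpa using hlen, ht⟩

lemma cons_mem_PF {k : ℕ} {q : List ℕ × List ℕ} (hq : q ∈ PF k) {a b : ℕ}
    (ha : 1 ≤ a) (hb : 1 ≤ b) : (a :: q.1, b :: q.2) ∈ PF (a + b + k) := by
  obtain ⟨hsum, hp1, hp2, hlen, hne⟩ := mem_PF.mp hq
  refine mem_PF.mpr ⟨by simp [List.sum_cons]; omega, ?_, ?_, by simp [hlen], by simp⟩
  · rintro x hx
    rcases List.mem_cons.mp hx with rfl | hx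
    exacts [ha, hp1 x hx]
  · rintro x hx
    rcases List.mem_cons.mp hx with rfl | hx
    exacts [hb, hp2 x hx]

lemma S_rec (φ : ℕ → ℕ → ℤ) (m : ℕ) :
    S φ m = Nc φ m + ∑ j ∈ Finset.range (m+1),
      (Kc φ cab j * S fone (m-j) + Kc φ ca j * S fB (m-j)
        + Kc φ cb j * S fA (m-j) + Kc φ fone j * S fAB (m-j)) := by
  classical
  rw [S, ← Finset.sum_filter_add_sum_filter_not (PF m) (fun p => p.1.tail = [])]
  congr 1
  · -- singleton part = Nc φ m
    rw [Nc]
    refine Finset.sum_nbij' (fun p => p.1.headI) (fun a => ([a], [m-a])) ?_ ?_ ?_ ?_ ?_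
    · intro p hp
      rw [Finset.mem_filter] at hp
      obtain ⟨a, b, ha, hb, hab, hpe⟩ := mem_PF_single hp.1 hp.2
      rw [hpe]
      simp only [List.headI]
      rw [Finset.mem_Icc]
      omega
    · intro a ha
      rw [Finset.mem_Icc] at ha
      rw [Finset.mem_filter]
      refine ⟨mem_PF.mpr ⟨by simp; omega, by simp; omega, by simp; omega, by simp, by simp⟩, by simp⟩
    · intro p hp
      rw [Finset.mem_filter] at hp
      obtain ⟨a, b, ha, hb, hab, hpe⟩ := mem_PF_single hp.1 hp.2
      rw [hpe]
      simp only [List.headI]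
      congr 3
      omega
    · intro a ha
      simp
    · intro p hp
      rw [Finset.mem_filter] at hp
      obtain ⟨a, b, ha, hb, hab, hpe⟩ := mem_PF_single hp.1 hp.2
      rw [hpe]
      simp only [List.headI]
      rw [Wt_single, mul_one]
      congr 1
      omega
  · -- main part
    have key : ∑ p ∈ (PF m).filter (fun p => ¬ p.1.tail = []),
        φ p.1.headI p.2.headI * Wt p.1 p.2
        = ∑ x ∈ ((Finset.Icc 1 m ×ˢ Finset.Icc 1 m).sigma
            (fun ab => PF (m - ab.1 - ab.2))),
          φ x.1.1 x.1.2 * (((x.1.1:ℤ) + x.2.1.headI - 1) *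
            ((x.1.2:ℤ) + x.2.2.headI - 1) * Wt x.2.1 x.2.2) := by
      refine Finset.sum_nbij' (fun p => ⟨(p.1.headI, p.2.headI), (p.1.tail, p.2.tail)⟩)
        (fun x => (x.1.1 :: x.2.1, x.1.2 :: x.2.2)) ?_ ?_ ?_ ?_ ?_
      · intro p hp
        rw [Finset.mem_filter] at hp
        obtain ⟨h1, h2, h3, h4, h5, h6, h7, h8, h9⟩ := mem_PF_cons hp.1 hp.2
        exact Finset.mem_sigma.mpr ⟨Finset.mem_product.mpr ⟨Finset.mem_Icc.mpr ⟨h1, h2⟩,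
          Finset.mem_Icc.mpr ⟨h3, h4⟩⟩, h5⟩
      · intro x hx
        rw [Finset.mem_sigma, Finset.mem_product, Finset.mem_Icc, Finset.mem_Icc] at hx
        obtain ⟨⟨⟨ha1, ha2⟩, hb1, hb2⟩, hq⟩ := hx
        rw [Finset.mem_filter]
        have hmem := cons_mem_PF hq ha1 hb1
        have hle : x.1.1 + x.1.2 ≤ m := by
          by_contra hgt
          have : m - x.1.1 - x.1.2 = 0 := by omega
          rw [this] at hq
          obtain ⟨hsum, hp1, -, -, hne⟩ := mem_PF.mp hq
          match h : x.2.1 with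
          | [] => exact hne h
          | c::t =>
            have := hp1 c (by rw [h]; simp)
            rw [h] at hsum
            simp [List.sum_cons] at hsum
            omega
        have : x.1.1 + x.1.2 + (m - x.1.1 - x.1.2) = m := by omega
        rw [this] at hmem
        refine ⟨hmem, ?_⟩
        simp only [List.tail_cons]
        exact (mem_PF.mp hq).2.2.2.2
      · intro p hp
        rw [Finset.mem_filter] at hp
        obtain ⟨h1, h2, h3, h4, h5, h6, h7, h8, h9⟩ := mem_PF_cons hp.1 hp.2
        show (p.1.headI :: p.1.tail, p.2.headI :: p.2.tail) = p
        rw [← h6, ← h7]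
      · intro x hx
        simp
      · intro p hp
        rw [Finset.mem_filter] at hp
        obtain ⟨h1, h2, h3, h4, h5, h6, h7, h8, h9⟩ := mem_PF_cons hp.1 hp.2
        have hW : Wt p.1 p.2 = ((p.1.headI:ℤ) + p.1.tail.headI - 1) *
            ((p.2.headI:ℤ) + p.2.tail.headI - 1) * Wt p.1.tail p.2.tail := by
          conv_lhs => rw [h6, h7]
          rw [Wt_cons _ _ hp.2 h9]
        rw [hW]
    -- now reindex the (a,b) double sum
    have inner : ∀ a b : ℕ, ∑ q ∈ PF (m - a - b),
        φ a b * (((a:ℤ) + q.1.headI - 1) * ((b:ℤ) + q.2.headI - 1) * Wt q.1 q.2)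
        = φ a b * ((a:ℤ) * (b:ℤ) * S fone (m-a-b) + (a:ℤ) * S fB (m-a-b)
            + (b:ℤ) * S fA (m-a-b) + S fAB (m-a-b)) := by
      intro a b
      simp only [S, mul_add, Finset.mul_sum, ← Finset.sum_add_distrib]
      refine Finset.sum_congr rfl fun q hq => ?_
      simp only [fone, fA, fB, fAB]
      ring
    rw [key, Finset.sum_sigma]
    rw [Finset.sum_congr rfl (fun ab (_ : ab ∈ Finset.Icc 1 m ×ˢ Finset.Icc 1 m) =>
      inner ab.1 ab.2)]
    have reidx : ∀ f : ℕ → ℕ → ℤ, (∀ a b, m < a + b → f a b = 0) →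
        ∑ ab ∈ Finset.Icc 1 m ×ˢ Finset.Icc 1 m, f ab.1 ab.2
          = ∑ j ∈ Finset.range (m+1), ∑ a ∈ Finset.Icc 1 (j-1), f a (j-a) := by
      intro f hf
      rw [← Finset.sum_filter_add_sum_filter_not (Finset.Icc 1 m ×ˢ Finset.Icc 1 m)
        (fun ab => ab.1 + ab.2 ≤ m)]
      have h2 : ∑ ab ∈ (Finset.Icc 1 m ×ˢ Finset.Icc 1 m).filter
          (fun ab => ¬ ab.1 + ab.2 ≤ m), f ab.1 ab.2 = 0 := by
        refine Finset.sum_eq_zero fun ab hab => ?_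
        rw [Finset.mem_filter] at hab
        exact hf _ _ (by omega)
      rw [h2, add_zero, Finset.sum_sigma']
      refine Finset.sum_nbij' (fun ab => ⟨ab.1 + ab.2, ab.1⟩) (fun x => (x.2, x.1 - x.2))
        ?_ ?_ ?_ ?_ ?_
      · intro ab hab
        simp only [Finset.mem_filter, Finset.mem_product, Finset.mem_Icc] at hab
        exact Finset.mem_sigma.mpr ⟨Finset.mem_range.mpr (show ab.1 + ab.2 < m + 1 by omega),
          Finset.mem_Icc.mpr ⟨show 1 ≤ ab.1 by omega, show ab.1 ≤ ab.1 + ab.2 - 1 by omega⟩⟩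
      · intro x hx
        rw [Finset.mem_sigma, Finset.mem_range, Finset.mem_Icc] at hx
        simp only [Finset.mem_filter, Finset.mem_product, Finset.mem_Icc]
        omega
      · intro ab hab
        simp only [Finset.mem_filter, Finset.mem_product, Finset.mem_Icc] at hab
        have h1 : ab.1 + ab.2 - ab.1 = ab.2 := by omega
        exact Prod.ext rfl h1
      · intro x hx
        rw [Finset.mem_sigma, Finset.mem_range, Finset.mem_Icc] at hx
        show (⟨x.2 + (x.1 - x.2), x.2⟩ : (_ : ℕ) × ℕ) = x
        have h1 : x.2 + (x.1 - x.2) = x.1 := by omega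
        rw [h1]
      · intro ab hab
        have h1 : ab.1 + ab.2 - ab.1 = ab.2 := by omega
        simp only [h1]
    have hvan : ∀ a b : ℕ, m < a + b →
        φ a b * ((a:ℤ) * (b:ℤ) * S fone (m-a-b) + (a:ℤ) * S fB (m-a-b)
          + (b:ℤ) * S fA (m-a-b) + S fAB (m-a-b)) = 0 := by
      intro a b hab
      have h0 : m - a - b = 0 := by omega
      rw [h0, S_small fone (by omega), S_small fB (by omega), S_small fA (by omega),
        S_small fAB (by omega)]
      ring
    refine (reidx (fun a b => φ a b * ((a:ℤ) * (b:ℤ) * S fone (m-a-b) + (a:ℤ) * S fB (m-a-b)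
      + (b:ℤ) * S fA (m-a-b) + S fAB (m-a-b))) hvan).trans ?_
    refine Finset.sum_congr rfl fun j hj => ?_
    rw [Finset.mem_range] at hj
    rw [Kc, Kc, Kc, Kc, Finset.sum_mul, Finset.sum_mul, Finset.sum_mul, Finset.sum_mul,
      ← Finset.sum_add_distrib, ← Finset.sum_add_distrib, ← Finset.sum_add_distrib]
    refine Finset.sum_congr rfl fun a ha => ?_
    rw [Finset.mem_Icc] at ha
    beta_reduce
    have hsub : m - a - (j - a) = m - j := by omega
    rw [hsub]
    simp only [cab, ca, cb, fone]
    ring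

noncomputable def Sps (φ : ℕ → ℕ → ℤ) : PowerSeries ℤ := PowerSeries.mk (S φ)
noncomputable def Nps (φ : ℕ → ℕ → ℤ) : PowerSeries ℤ := PowerSeries.mk (Nc φ)
noncomputable def Kps (φ c : ℕ → ℕ → ℤ) : PowerSeries ℤ := PowerSeries.mk (Kc φ c)

lemma Sps_eq (φ : ℕ → ℕ → ℤ) :
    Sps φ = Nps φ + Kps φ cab * Sps fone + Kps φ ca * Sps fB
      + Kps φ cb * Sps fA + Kps φ fone * Sps fAB := by
  ext n
  simp only [Sps, Nps, Kps, map_add, PowerSeries.coeff_mk, PowerSeries.coeff_mul,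
    Finset.Nat.sum_antidiagonal_eq_sum_range_succ_mk, PowerSeries.coeff_mk]
  rw [S_rec φ n]
  simp only [Finset.sum_add_distrib]
  ring

noncomputable def Ups (f : ℕ → ℤ) : PowerSeries ℤ :=
  PowerSeries.mk fun n => if n = 0 then 0 else f n

lemma Ups_mul (f g : ℕ → ℤ) :
    Ups f * Ups g = PowerSeries.mk fun j => ∑ a ∈ Finset.Icc 1 (j-1), f a * g (j-a) := by
  ext n
  rw [PowerSeries.coeff_mul, Finset.Nat.sum_antidiagonal_eq_sum_range_succ_mk,
    PowerSeries.coeff_mk]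
  rw [← Finset.sum_subset (show Finset.Icc 1 (n-1) ⊆ Finset.range (n+1) by
    intro x hx; rw [Finset.mem_Icc] at hx; rw [Finset.mem_range]; omega)]
  · refine Finset.sum_congr rfl fun a ha => ?_
    rw [Finset.mem_Icc] at ha
    simp only [Ups, PowerSeries.coeff_mk]
    rw [if_neg (by omega), if_neg (by omega)]
  · intro x hx hnx
    rw [Finset.mem_range] at hx
    rw [Finset.mem_Icc] at hnx
    simp only [Ups, PowerSeries.coeff_mk]
    rcases Nat.eq_zero_or_pos x with rfl | hx0
    · rw [if_pos rfl, zero_mul]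
    · have : n - x = 0 := by omega
      rw [this, if_pos rfl, mul_zero]

def g1 : ℕ → ℤ := fun _ => 1
def gid : ℕ → ℤ := fun a => (a:ℤ)
def gm1 : ℕ → ℤ := fun a => (a:ℤ) - 1
def gq : ℕ → ℤ := fun a => (a:ℤ) * ((a:ℤ) - 1)

lemma Kps_eq (φ c : ℕ → ℕ → ℤ) (f g : ℕ → ℤ)
    (h : ∀ a b, 1 ≤ a → 1 ≤ b → φ a b * c a b = f a * g b) :
    Kps φ c = Ups f * Ups g := by
  rw [Ups_mul]
  ext n
  rw [Kps, PowerSeries.coeff_mk, PowerSeries.coeff_mk, Kc]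
  refine Finset.sum_congr rfl fun a ha => ?_
  rw [Finset.mem_Icc] at ha
  exact h a (n-a) ha.1 (by omega)

lemma Nps_eq (φ : ℕ → ℕ → ℤ) (f g : ℕ → ℤ)
    (h : ∀ a b, 1 ≤ a → 1 ≤ b → φ a b = f a * g b) :
    Nps φ = Ups f * Ups g := by
  rw [Ups_mul]
  ext n
  rw [Nps, PowerSeries.coeff_mk, PowerSeries.coeff_mk, Nc]
  refine Finset.sum_congr rfl fun a ha => ?_
  rw [Finset.mem_Icc] at ha
  exact h a (n-a) ha.1 (by omega)

-- rationality
def IsRat (x : PowerSeries ℤ) : Prop :=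
  ∃ P Q : Polynomial ℤ, Q.coeff 0 ≠ 0 ∧ (Q : PowerSeries ℤ) * x = (P : PowerSeries ℤ)

lemma isRat_poly (p : Polynomial ℤ) : IsRat (p : PowerSeries ℤ) :=
  ⟨p, 1, by simp, by simp⟩

lemma isRat_add {x y : PowerSeries ℤ} (hx : IsRat x) (hy : IsRat y) : IsRat (x + y) := by
  obtain ⟨P1, Q1, h1, e1⟩ := hx
  obtain ⟨P2, Q2, h2, e2⟩ := hy
  refine ⟨Q2 * P1 + Q1 * P2, Q1 * Q2, by simp [Polynomial.mul_coeff_zero]; exact ⟨h1, h2⟩, ?_⟩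
  push_cast [Polynomial.coe_mul, Polynomial.coe_add]
  rw [mul_add]
  calc (Q1:PowerSeries ℤ) * Q2 * x + (Q1:PowerSeries ℤ) * Q2 * y
      = (Q2:PowerSeries ℤ) * ((Q1:PowerSeries ℤ) * x)
        + (Q1:PowerSeries ℤ) * ((Q2:PowerSeries ℤ) * y) := by ring
    _ = (Q2:PowerSeries ℤ) * P1 + (Q1:PowerSeries ℤ) * P2 := by rw [e1, e2]

lemma isRat_mul {x y : PowerSeries ℤ} (hx : IsRat x) (hy : IsRat y) : IsRat (x * y) := by
  obtain ⟨P1, Q1, h1, e1⟩ := hx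
  obtain ⟨P2, Q2, h2, e2⟩ := hy
  refine ⟨P1 * P2, Q1 * Q2, by simp [Polynomial.mul_coeff_zero]; exact ⟨h1, h2⟩, ?_⟩
  push_cast [Polynomial.coe_mul]
  calc (Q1:PowerSeries ℤ) * Q2 * (x * y)
      = ((Q1:PowerSeries ℤ) * x) * ((Q2:PowerSeries ℤ) * y) := by ring
    _ = (P1:PowerSeries ℤ) * P2 := by rw [e1, e2]

lemma isRat_neg {x : PowerSeries ℤ} (hx : IsRat x) : IsRat (-x) := by
  obtain ⟨P1, Q1, h1, e1⟩ := hx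
  exact ⟨-P1, Q1, h1, by push_cast [Polynomial.coe_neg]; rw [mul_neg, e1]⟩

noncomputable def ratSub : Subring (PowerSeries ℤ) where
  carrier := {x | IsRat x}
  zero_mem' := by simpa using isRat_poly 0
  one_mem' := by simpa using isRat_poly 1
  add_mem' := isRat_add
  mul_mem' := isRat_mul
  neg_mem' := isRat_neg

lemma mem_ratSub {x : PowerSeries ℤ} : x ∈ ratSub ↔ IsRat x := Iff.rfl

lemma isRat_of_poly_mul (q : Polynomial ℤ) (hq : q.coeff 0 ≠ 0) {x y : PowerSeries ℤ}
    (h : (q : PowerSeries ℤ) * x = y) (hy : IsRat y) : IsRat x := by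
  obtain ⟨P1, Q1, h1, e1⟩ := hy
  refine ⟨P1, Q1 * q, by simp [Polynomial.mul_coeff_zero]; exact ⟨h1, hq⟩, ?_⟩
  push_cast [Polynomial.coe_mul]
  rw [mul_assoc, h, e1]

lemma one_sub_X_coeff : ((1 - Polynomial.X : Polynomial ℤ) : PowerSeries ℤ)
    = 1 - PowerSeries.X := by
  push_cast [Polynomial.coe_sub, Polynomial.coe_one, Polynomial.coe_X]
  rfl

lemma isRat_Ups_g1 : IsRat (Ups g1) := by
  refine ⟨Polynomial.X, 1 - Polynomial.X, by simp, ?_⟩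
  rw [one_sub_X_coeff, Polynomial.coe_X]
  ext n
  rw [sub_mul, one_mul, map_sub]
  cases n with
  | zero => simp [Ups, PowerSeries.coeff_mk]
  | succ k =>
    rw [PowerSeries.coeff_succ_X_mul]
    simp only [Ups, PowerSeries.coeff_mk, PowerSeries.coeff_X, g1]
    cases k with
    | zero => simp
    | succ k2 => simp

lemma aux_gid : ((1 - Polynomial.X : Polynomial ℤ) : PowerSeries ℤ) * Ups gid = Ups g1 := by
  rw [one_sub_X_coeff]
  ext n
  rw [sub_mul, one_mul, map_sub]
  cases n with
  | zero => simp [Ups, PowerSeries.coeff_mk]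
  | succ k =>
    rw [PowerSeries.coeff_succ_X_mul]
    simp only [Ups, PowerSeries.coeff_mk, gid, g1]
    cases k with
    | zero => simp
    | succ k2 =>
      rw [if_neg (by omega), if_neg (by omega), if_neg (by omega)]
      push_cast
      ring

lemma isRat_Ups_gid : IsRat (Ups gid) :=
  isRat_of_poly_mul _ (by simp) aux_gid isRat_Ups_g1

lemma Ups_gm1_eq : Ups gm1 = Ups gid - Ups g1 := by
  ext n
  rw [map_sub]
  simp only [Ups, PowerSeries.coeff_mk, gm1, gid, g1]
  cases n with
  | zero => simp
  | succ k => rw [if_neg (by omega), if_neg (by omega), if_neg (by omega)]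

lemma isRat_Ups_gm1 : IsRat (Ups gm1) := by
  rw [Ups_gm1_eq]
  exact Subring.sub_mem ratSub isRat_Ups_gid isRat_Ups_g1

lemma aux_gq : ((1 - Polynomial.X : Polynomial ℤ) : PowerSeries ℤ) * Ups gq
    = PowerSeries.C 2 * Ups gm1 := by
  rw [one_sub_X_coeff]
  ext n
  rw [sub_mul, one_mul, map_sub, PowerSeries.coeff_C_mul]
  cases n with
  | zero => simp [Ups, PowerSeries.coeff_mk]
  | succ k =>
    rw [PowerSeries.coeff_succ_X_mul]
    simp only [Ups, PowerSeries.coeff_mk, gq, gm1]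
    cases k with
    | zero => simp
    | succ k2 =>
      rw [if_neg (by omega), if_neg (by omega), if_neg (by omega)]
      push_cast
      ring

lemma isRat_Ups_gq : IsRat (Ups gq) := by
  have h2 : IsRat (PowerSeries.C 2 * Ups gm1) := by
    have hc : IsRat (PowerSeries.C 2) := by
      rw [← Polynomial.coe_C]
      exact isRat_poly _
    exact isRat_mul hc isRat_Ups_gm1
  exact isRat_of_poly_mul _ (by simp) aux_gq h2

noncomputable def φv : Fin 4 → (ℕ → ℕ → ℤ) := ![fone, fA, fB, fAB]
noncomputable def cv : Fin 4 → (ℕ → ℕ → ℤ) := ![cab, cb, ca, fone]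
noncomputable def Mmat : Matrix (Fin 4) (Fin 4) (PowerSeries ℤ) :=
  Matrix.of fun i j => Kps (φv i) (cv j)
noncomputable def Amat : Matrix (Fin 4) (Fin 4) (PowerSeries ℤ) := 1 - Mmat
noncomputable def Xv : Fin 4 → PowerSeries ℤ := ![Sps fone, Sps fA, Sps fB, Sps fAB]
noncomputable def Nv : Fin 4 → PowerSeries ℤ := fun i => Nps (φv i)

lemma hA : Amat.mulVec Xv = Nv := by
  funext i
  fin_cases i <;>
    simp [Matrix.mulVec, dotProduct, Fin.sum_univ_four, Amat, Mmat, Xv, Nv, φv, cv,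
      Matrix.one_apply, Matrix.sub_apply] <;>
    [linear_combination (Sps_eq fone); linear_combination (Sps_eq fA);
     linear_combination (Sps_eq fB); linear_combination (Sps_eq fAB)]

lemma det_mem (B : Matrix (Fin 4) (Fin 4) (PowerSeries ℤ))
    (h : ∀ i j, B i j ∈ ratSub) : B.det ∈ ratSub := by
  rw [Matrix.det_apply]
  refine Subring.sum_mem _ fun σ _ => ?_
  rw [Units.smul_def]
  refine zsmul_mem ?_ _
  exact Subring.prod_mem _ fun i _ => h _ _

lemma kps_mem (φ c : ℕ → ℕ → ℤ) (f g : ℕ → ℤ)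
    (h : ∀ a b, 1 ≤ a → 1 ≤ b → φ a b * c a b = f a * g b)
    (hf : IsRat (Ups f)) (hg : IsRat (Ups g)) : Kps φ c ∈ ratSub := by
  rw [Kps_eq φ c f g h]
  exact Subring.mul_mem _ (mem_ratSub.mpr hf) (mem_ratSub.mpr hg)

lemma kmem' (φ c : ℕ → ℕ → ℤ) (f g : ℕ → ℤ)
    (h : ∀ a b, 1 ≤ a → 1 ≤ b → φ a b * c a b = f a * g b)
    (hf : IsRat (Ups f)) (hg : IsRat (Ups g)) : Kps φ c ∈ ratSub := by
  rw [Kps_eq φ c f g h]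
  exact Subring.mul_mem _ (mem_ratSub.mpr hf) (mem_ratSub.mpr hg)

lemma hMmem : ∀ i j, Mmat i j ∈ ratSub := by
  have pt : ∀ (φ c : ℕ → ℕ → ℤ) (f g : ℕ → ℤ),
      (∀ a b : ℕ, φ a b * c a b = f a * g b) →
      (∀ a b : ℕ, 1 ≤ a → 1 ≤ b → φ a b * c a b = f a * g b) :=
    fun φ c f g h a b _ _ => h a b
  intro i j
  fin_cases i <;> fin_cases j <;>
    simp only [Mmat, Matrix.of_apply, φv, cv, Matrix.cons_val_zero, Matrix.cons_val_one,
      Matrix.head_cons, Matrix.cons_val_two, Matrix.tail_cons, Matrix.cons_val_three]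
  · exact kmem' _ _ gid gid (pt _ _ _ _ fun a b => by simp [fone, cab, gid]) isRat_Ups_gid isRat_Ups_gid
  · exact kmem' _ _ g1 gid (pt _ _ _ _ fun a b => by simp [fone, cb, g1, gid]) isRat_Ups_g1 isRat_Ups_gid
  · exact kmem' _ _ gid g1 (pt _ _ _ _ fun a b => by simp [fone, ca, g1, gid]) isRat_Ups_gid isRat_Ups_g1
  · exact kmem' _ _ g1 g1 (pt _ _ _ _ fun a b => by simp [fone, g1]) isRat_Ups_g1 isRat_Ups_g1
  · exact kmem' _ _ gq gid (pt _ _ _ _ fun a b => by simp [fA, cab, gq, gid]; try ring) isRat_Ups_gq isRat_Ups_gid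
  · exact kmem' _ _ gm1 gid (pt _ _ _ _ fun a b => by simp [fA, cb, gm1, gid]; try ring) isRat_Ups_gm1 isRat_Ups_gid
  · exact kmem' _ _ gq g1 (pt _ _ _ _ fun a b => by simp [fA, ca, gq, g1]; try ring) isRat_Ups_gq isRat_Ups_g1
  · exact kmem' _ _ gm1 g1 (pt _ _ _ _ fun a b => by simp [fA, fone, gm1, g1]) isRat_Ups_gm1 isRat_Ups_g1
  · exact kmem' _ _ gid gq (pt _ _ _ _ fun a b => by simp [fB, cab, gid, gq]; try ring) isRat_Ups_gid isRat_Ups_gq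
  · exact kmem' _ _ g1 gq (pt _ _ _ _ fun a b => by simp [fB, cb, g1, gq]; try ring) isRat_Ups_g1 isRat_Ups_gq
  · exact kmem' _ _ gid gm1 (pt _ _ _ _ fun a b => by simp [fB, ca, gid, gm1]; try ring) isRat_Ups_gid isRat_Ups_gm1
  · exact kmem' _ _ g1 gm1 (pt _ _ _ _ fun a b => by simp [fB, fone, g1, gm1]) isRat_Ups_g1 isRat_Ups_gm1
  · exact kmem' _ _ gq gq (pt _ _ _ _ fun a b => by simp [fAB, cab, gq]; try ring) isRat_Ups_gq isRat_Ups_gq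
  · exact kmem' _ _ gm1 gq (pt _ _ _ _ fun a b => by simp [fAB, cb, gm1, gq]; try ring) isRat_Ups_gm1 isRat_Ups_gq
  · exact kmem' _ _ gq gm1 (pt _ _ _ _ fun a b => by simp [fAB, ca, gq, gm1]; try ring) isRat_Ups_gq isRat_Ups_gm1
  · exact kmem' _ _ gm1 gm1 (pt _ _ _ _ fun a b => by simp [fAB, fone, gm1]) isRat_Ups_gm1 isRat_Ups_gm1

lemma hAmem : ∀ i j, Amat i j ∈ ratSub := by
  intro i j
  rw [Amat, Matrix.sub_apply]
  refine Subring.sub_mem _ ?_ (hMmem i j)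
  rw [Matrix.one_apply]
  split
  · exact Subring.one_mem _
  · exact Subring.zero_mem _

lemma hNmem : ∀ i, Nv i ∈ ratSub := by
  intro i
  fin_cases i <;>
    simp only [Nv, φv, Matrix.cons_val_zero, Matrix.cons_val_one, Matrix.head_cons,
      Matrix.cons_val_two, Matrix.tail_cons, Matrix.cons_val_three]
  · rw [Nps_eq _ g1 g1 (fun a b _ _ => by simp [fone, g1])]
    exact Subring.mul_mem _ (mem_ratSub.mpr isRat_Ups_g1) (mem_ratSub.mpr isRat_Ups_g1)
  · rw [Nps_eq _ gm1 g1 (fun a b _ _ => by simp [fA, gm1, g1])]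
    exact Subring.mul_mem _ (mem_ratSub.mpr isRat_Ups_gm1) (mem_ratSub.mpr isRat_Ups_g1)
  · rw [Nps_eq _ g1 gm1 (fun a b _ _ => by simp [fB, g1, gm1])]
    exact Subring.mul_mem _ (mem_ratSub.mpr isRat_Ups_g1) (mem_ratSub.mpr isRat_Ups_gm1)
  · rw [Nps_eq _ gm1 gm1 (fun a b _ _ => by simp [fAB, gm1])]
    exact Subring.mul_mem _ (mem_ratSub.mpr isRat_Ups_gm1) (mem_ratSub.mpr isRat_Ups_gm1)

lemma hAdjmem : ∀ i j, Amat.adjugate i j ∈ ratSub := by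
  intro i j
  rw [Matrix.adjugate_apply]
  refine det_mem _ fun k l => ?_
  rw [Matrix.updateRow_apply]
  split
  · rw [Pi.single_apply]
    split
    · exact Subring.one_mem _
    · exact Subring.zero_mem _
  · exact hAmem k l

lemma hdet_eq : Amat.det * Sps fone = (Amat.adjugate.mulVec Nv) 0 := by
  have h2 : Amat.adjugate.mulVec (Amat.mulVec Xv) = Amat.adjugate.mulVec Nv := by rw [hA]
  rw [Matrix.mulVec_mulVec, Matrix.adjugate_mul, Matrix.smul_mulVec,
    Matrix.one_mulVec] at h2
  have h3 := congrFun h2 0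
  rw [Pi.smul_apply, smul_eq_mul] at h3
  rw [← h3]
  rfl

lemma hdet_const : PowerSeries.constantCoeff Amat.det = 1 := by
  rw [RingHom.map_det, RingHom.mapMatrix_apply]
  have : Amat.map (PowerSeries.constantCoeff) = 1 := by
    funext i j
    rw [Matrix.map_apply, Amat, Matrix.sub_apply, map_sub]
    have hM0 : PowerSeries.constantCoeff (Mmat i j) = 0 := by
      rw [Mmat, Matrix.of_apply, Kps, PowerSeries.constantCoeff_mk, Kc]
      rw [show Finset.Icc 1 (0-1) = (∅ : Finset ℕ) by rfl]
      simp
    rw [hM0, sub_zero]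
    rw [Matrix.one_apply, Matrix.one_apply]
    split <;> simp
  rw [this, Matrix.det_one]

theorem isRat_Sps_fone : IsRat (Sps fone) := by
  have hrhs : IsRat ((Amat.adjugate.mulVec Nv) 0) := by
    rw [Matrix.mulVec, dotProduct]
    refine mem_ratSub.mp (Subring.sum_mem _ fun j _ => Subring.mul_mem _ (hAdjmem 0 j) (hNmem j))
  have hdet : IsRat Amat.det := mem_ratSub.mp (det_mem _ hAmem)
  obtain ⟨Pd, Qd, hQd, hd⟩ := hdet
  obtain ⟨Pr, Qr, hQr, hr⟩ := hrhs
  refine ⟨Qd * Pr, Qr * Pd, ?_, ?_⟩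
  · have hPd0 : Pd.coeff 0 ≠ 0 := by
      have h5 := congrArg (PowerSeries.constantCoeff) hd
      rw [map_mul, hdet_const, mul_one] at h5
      rw [← PowerSeries.coeff_zero_eq_constantCoeff_apply,
        ← PowerSeries.coeff_zero_eq_constantCoeff_apply, Polynomial.coeff_coe,
        Polynomial.coeff_coe] at h5
      rw [← h5]
      exact hQd
    rw [Polynomial.mul_coeff_zero]
    exact mul_ne_zero hQr hPd0
  · have key : (Pd : PowerSeries ℤ) * Sps fone
        = (Qd : PowerSeries ℤ) * (Amat.adjugate.mulVec Nv 0) := by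
      rw [← hd, ← hdet_eq]
      ring
    calc ((Qr * Pd : Polynomial ℤ) : PowerSeries ℤ) * Sps fone
        = (Qr : PowerSeries ℤ) * ((Pd : PowerSeries ℤ) * Sps fone) := by
          rw [Polynomial.coe_mul]; ring
      _ = (Qd : PowerSeries ℤ) * ((Qr : PowerSeries ℤ) * (Amat.adjugate.mulVec Nv 0)) := by
          rw [key]; ring
      _ = (Qd : PowerSeries ℤ) * (Pr : PowerSeries ℤ) := by rw [hr]
      _ = ((Qd * Pr : Polynomial ℤ) : PowerSeries ℤ) := by rw [Polynomial.coe_mul]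

lemma Lset_zero_nil {l : List ℕ} (h : l ∈ Lset 0) : l = [] := by
  obtain ⟨hs, hp⟩ := mem_Lset.mp h
  cases l with
  | nil => rfl
  | cons a t =>
    have := hp a (by simp)
    simp [List.sum_cons] at hs
    omega

lemma Lset_ne_nil {m₁ : ℕ} {l : List ℕ} (h : l ∈ Lset m₁) (hm : 1 ≤ m₁) : l ≠ [] := by
  intro hl
  obtain ⟨hs, -⟩ := mem_Lset.mp h
  rw [hl] at hs
  simp at hs
  omega

-- regrouped form of S
lemma S_regroup (m : ℕ) : S fone m
    = ∑ m₁ ∈ Finset.range (m+1), ∑ l₁ ∈ Lset m₁, ∑ l₂ ∈ Lset (m - m₁),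
        (if l₁.length = l₂.length ∧ l₁ ≠ [] then Wt l₁ l₂ else 0) := by
  rw [S]
  simp only [fone, one_mul]
  rw [PF, Finset.sum_filter, Finset.sum_biUnion]
  · exact Finset.sum_congr rfl fun m₁ _ => Finset.sum_product _ _ _
  · intro x _ y _ hxy
    refine Finset.disjoint_left.mpr fun p hp hp' => ?_
    rw [Finset.mem_product] at hp hp'
    have h1 := (mem_Lset.mp hp.1).1
    have h2 := (mem_Lset.mp hp'.1).1
    exact hxy (by omega)

lemma vecGF_coeff (n : ℕ) :
    (PowerSeries.coeff n) vecGF = if 2 ∣ n then S fone (n / 2) else 0 := by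
  rw [vecGF, PowerSeries.coeff_mk]
  have h1 : ∀ m₁ m₂ : ℕ, (∑ c₁ : Composition m₁, ∑ c₂ : Composition m₂,
      if c₁.length = c₂.length ∧ 2 * (m₁ + m₂) = n then
        (((c₁.blocks.zip c₂.blocks).zip (c₁.blocks.zip c₂.blocks).tail).map
          fun q => ((q.1.1 : ℤ) + q.2.1 - 1) * ((q.1.2 : ℤ) + q.2.2 - 1)).prod
      else 0)
      = ∑ l₁ ∈ Lset m₁, ∑ l₂ ∈ Lset m₂,
          (if l₁.length = l₂.length ∧ 2 * (m₁ + m₂) = n then Wt l₁ l₂ else 0) := by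
    intro m₁ m₂
    rw [← sum_composition m₁ (fun l₁ => ∑ l₂ ∈ Lset m₂,
      (if l₁.length = l₂.length ∧ 2 * (m₁ + m₂) = n then Wt l₁ l₂ else 0))]
    refine Finset.sum_congr rfl fun c₁ _ => ?_
    rw [← sum_composition m₂ (fun l₂ =>
      (if c₁.blocks.length = l₂.length ∧ 2 * (m₁ + m₂) = n then Wt c₁.blocks l₂ else 0))]
    refine Finset.sum_congr rfl fun c₂ _ => ?_
    simp only [Wt, Composition.blocks_length]
  simp only [h1]
  by_cases hpar : 2 ∣ n
  · obtain ⟨m, rfl⟩ := hpar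
    rw [if_pos ⟨m, rfl⟩]
    have hm2 : 2 * m / 2 = m := by omega
    rw [hm2, S_regroup]
    -- step E1: collapse m₂ sum
    have E1 : ∀ m₁ ∈ Finset.Icc 1 (2*m),
        (∑ m₂ ∈ Finset.Icc 1 (2*m), ∑ l₁ ∈ Lset m₁, ∑ l₂ ∈ Lset m₂,
          (if l₁.length = l₂.length ∧ 2 * (m₁ + m₂) = 2*m then Wt l₁ l₂ else 0))
        = ∑ l₁ ∈ Lset m₁, ∑ l₂ ∈ Lset (m - m₁),
            (if l₁.length = l₂.length ∧ 2 * (m₁ + (m - m₁)) = 2*m then Wt l₁ l₂ else 0) := by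
      intro m₁ hm₁
      rw [Finset.mem_Icc] at hm₁
      refine Finset.sum_eq_single (m - m₁) ?_ ?_
      · intro b hb hbne
        refine Finset.sum_eq_zero fun l₁ _ => Finset.sum_eq_zero fun l₂ _ => ?_
        rw [if_neg]
        rintro ⟨-, h2⟩
        omega
      · intro hnot
        rw [Finset.mem_Icc] at hnot
        have hm0 : m - m₁ = 0 := by omega
        refine Finset.sum_eq_zero fun l₁ hl₁ => Finset.sum_eq_zero fun l₂ hl₂ => ?_
        rw [hm0] at hl₂ ⊢
        rw [if_neg]
        rintro ⟨hlen, h2⟩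
        have hl2nil : l₂ = [] := Lset_zero_nil hl₂
        have hl1ne : l₁ ≠ [] := Lset_ne_nil hl₁ (by omega)
        rw [hl2nil] at hlen
        simp at hlen
        exact hl1ne (by simpa using hlen)
    rw [Finset.sum_congr rfl E1]
    -- step E2: shrink outer range to Icc 1 m
    rw [← Finset.sum_subset (show Finset.Icc 1 m ⊆ Finset.Icc 1 (2*m) by
        intro x hx; rw [Finset.mem_Icc] at hx ⊢; omega)]
    · -- step E3 + E4
      rw [← Finset.sum_subset (show Finset.Icc 1 m ⊆ Finset.range (m+1) by
          intro x hx; rw [Finset.mem_Icc] at hx; rw [Finset.mem_range]; omega)]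
      · refine Finset.sum_congr rfl fun m₁ hm₁ => ?_
        rw [Finset.mem_Icc] at hm₁
        refine Finset.sum_congr rfl fun l₁ hl₁ => Finset.sum_congr rfl fun l₂ hl₂ => ?_
        by_cases hlen : l₁.length = l₂.length
        · rw [if_pos ⟨hlen, by omega⟩, if_pos ⟨hlen, Lset_ne_nil hl₁ (by omega)⟩]
        · rw [if_neg (by rintro ⟨h, -⟩; exact hlen h), if_neg (by rintro ⟨h, -⟩; exact hlen h)]
      · intro m₁ hm₁ hm₁n
        rw [Finset.mem_range] at hm₁
        rw [Finset.mem_Icc] at hm₁n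
        have : m₁ = 0 := by omega
        subst this
        refine Finset.sum_eq_zero fun l₁ hl₁ => Finset.sum_eq_zero fun l₂ _ => ?_
        rw [Lset_zero_nil hl₁, if_neg]
        rintro ⟨-, hne⟩
        exact hne rfl
    · intro m₁ hm₁ hm₁n
      rw [Finset.mem_Icc] at hm₁ hm₁n
      refine Finset.sum_eq_zero fun l₁ hl₁ => Finset.sum_eq_zero fun l₂ hl₂ => ?_
      have hm0 : m - m₁ = 0 := by omega
      rw [if_neg]
      rintro ⟨hlen, -⟩
      have hl2nil : l₂ = [] := Lset_zero_nil (by rwa [hm0] at hl₂)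
      have hl1ne : l₁ ≠ [] := Lset_ne_nil hl₁ (by omega)
      rw [hl2nil] at hlen
      simp at hlen
      exact hl1ne (by simpa using hlen)
  · rw [if_neg hpar]
    refine Finset.sum_eq_zero fun m₁ _ => Finset.sum_eq_zero fun m₂ _ =>
      Finset.sum_eq_zero fun l₁ _ => Finset.sum_eq_zero fun l₂ _ => ?_
    rw [if_neg]
    rintro ⟨-, h2⟩
    exact hpar ⟨m₁ + m₂, h2.symm⟩

noncomputable def evzFun (f : PowerSeries ℤ) : PowerSeries ℤ :=
  PowerSeries.mk fun n => if 2 ∣ n then PowerSeries.coeff (n/2) f else 0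

lemma evzFun_coeff (f : PowerSeries ℤ) (n : ℕ) :
    PowerSeries.coeff n (evzFun f) = if 2 ∣ n then PowerSeries.coeff (n/2) f else 0 :=
  PowerSeries.coeff_mk _ _

lemma evzFun_one : evzFun 1 = 1 := by
  ext n
  rw [evzFun_coeff]
  simp only [PowerSeries.coeff_one]
  split_ifs <;> omega

lemma evzFun_mul (f g : PowerSeries ℤ) : evzFun (f * g) = evzFun f * evzFun g := by
  ext n
  rw [evzFun_coeff, PowerSeries.coeff_mul,
    Finset.Nat.sum_antidiagonal_eq_sum_range_succ_mk]
  by_cases hpar : 2 ∣ n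
  · obtain ⟨m, rfl⟩ := hpar
    rw [if_pos ⟨m, rfl⟩]
    have hm2 : 2 * m / 2 = m := by omega
    rw [hm2, PowerSeries.coeff_mul, Finset.Nat.sum_antidiagonal_eq_sum_range_succ_mk]
    rw [← Finset.sum_subset (show (Finset.range (m+1)).image (fun k => 2*k)
        ⊆ Finset.range (2*m+1) by
      intro x hx
      rw [Finset.mem_image] at hx
      obtain ⟨k, hk, rfl⟩ := hx
      rw [Finset.mem_range] at hk ⊢
      omega)]
    · rw [Finset.sum_image (by intro x _ y _ h; simp only at h; omega)]
      refine Finset.sum_congr rfl fun k hk => ?_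
      rw [Finset.mem_range] at hk
      rw [evzFun_coeff, evzFun_coeff, if_pos ⟨k, rfl⟩,
        if_pos (show 2 ∣ 2*m - 2*k by omega)]
      have e1 : 2 * k / 2 = k := by omega
      have e2 : (2*m - 2*k) / 2 = m - k := by omega
      rw [e1, e2]
    · intro x hx hnx
      rw [Finset.mem_range] at hx
      by_cases h2 : 2 ∣ x
      · exfalso
        refine hnx (Finset.mem_image.mpr ⟨x/2, ?_, by omega⟩)
        rw [Finset.mem_range]
        omega
      · rw [evzFun_coeff, if_neg h2, zero_mul]
  · rw [if_neg hpar, PowerSeries.coeff_mul, Finset.Nat.sum_antidiagonal_eq_sum_range_succ_mk]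
    symm
    refine Finset.sum_eq_zero fun k hk => ?_
    rw [Finset.mem_range] at hk
    by_cases h2 : 2 ∣ k
    · rw [evzFun_coeff g, if_neg (show ¬ 2 ∣ (n - k) by omega), mul_zero]
    · rw [evzFun_coeff f, if_neg h2, zero_mul]

lemma evzFun_add (f g : PowerSeries ℤ) : evzFun (f + g) = evzFun f + evzFun g := by
  ext n
  rw [map_add (PowerSeries.coeff n) (evzFun f) (evzFun g), evzFun_coeff, evzFun_coeff,
    evzFun_coeff]
  by_cases h : 2 ∣ n
  · rw [if_pos h, if_pos h, if_pos h, map_add]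
  · rw [if_neg h, if_neg h, if_neg h, add_zero]

lemma evzFun_zero : evzFun 0 = 0 := by
  ext n
  rw [evzFun_coeff]
  simp

noncomputable def evz : PowerSeries ℤ →+* PowerSeries ℤ where
  toFun := evzFun
  map_one' := evzFun_one
  map_mul' := evzFun_mul
  map_zero' := evzFun_zero
  map_add' := evzFun_add

lemma evz_coeff (f : PowerSeries ℤ) (n : ℕ) :
    PowerSeries.coeff n (evz f) = if 2 ∣ n then PowerSeries.coeff (n/2) f else 0 :=
  evzFun_coeff f n

lemma evz_X : evz PowerSeries.X = PowerSeries.X ^ 2 := by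
  ext n
  rw [evz_coeff, PowerSeries.coeff_X_pow]
  simp only [PowerSeries.coeff_X]
  split_ifs <;> omega

lemma evz_C (c : ℤ) : evz (PowerSeries.C c) = PowerSeries.C c := by
  ext n
  rw [evz_coeff]
  simp only [PowerSeries.coeff_C]
  split_ifs <;> omega

lemma evz_coe (q : Polynomial ℤ) :
    evz (q : PowerSeries ℤ) = ((q.comp (Polynomial.X ^ 2) : Polynomial ℤ) : PowerSeries ℤ) := by
  induction q using Polynomial.induction_on' with
  | add p q hp hq =>
    rw [Polynomial.add_comp, Polynomial.coe_add, Polynomial.coe_add, map_add, hp, hq]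
  | monomial k c =>
    rw [← Polynomial.C_mul_X_pow_eq_monomial, Polynomial.mul_comp, Polynomial.C_comp,
      Polynomial.pow_comp, Polynomial.X_comp]
    simp only [Polynomial.coe_mul, Polynomial.coe_pow, Polynomial.coe_C, Polynomial.coe_X]
    rw [map_mul, map_pow, evz_C, evz_X, ← pow_mul, mul_comm 2 k, pow_mul]

end VecGFAux

/-- The generating function `Σ_n d(n) tⁿ` for towers of `a×b` pieces, counted by
side-surface area, is a rational function of `t`. -/
theorem vecGF_rational :
    ∃ P Q : Polynomial ℤ, Q.coeff 0 ≠ 0 ∧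
      (Q : PowerSeries ℤ) * vecGF = (P : PowerSeries ℤ) := by
  obtain ⟨P, Q, hQ0, hQ⟩ := isRat_Sps_fone
  have hvec : vecGF = evz (Sps fone) := by
    ext n
    rw [evz_coeff, Sps, PowerSeries.coeff_mk]
    exact vecGF_coeff n
  refine ⟨P.comp (Polynomial.X ^ 2), Q.comp (Polynomial.X ^ 2), ?_, ?_⟩
  · have hc : (Q.comp (Polynomial.X ^ 2)).coeff 0 = Q.coeff 0 := by
      rw [Polynomial.coeff_zero_eq_eval_zero, Polynomial.eval_comp,
        Polynomial.coeff_zero_eq_eval_zero]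
      norm_num
    rw [hc]
    exact hQ0
  · rw [hvec, ← evz_coe, ← evz_coe, ← map_mul, hQ]
end

section
/- For any n ≥ 1, the number b(n) = Σ_{(a_1,...,a_r)⊨n} ∏_{i=2}^r a_i of leftist horizontally convex polyominoes satisfies b(n) = F_{2n-1}, and consequently b(n) is even if and only if 2n ≡ 1 (mod 3). -/
/-- `leftist n` = Σ over compositions `(a₁,…,a_r)` of `n` of `a₂ a₃ ⋯ a_r`. -/
def leftist (n : ℕ) : ℕ := ∑ c : Composition n, c.blocks.tail.prod

/-- Sum over compositions of the product of all parts. -/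
def totalProd (n : ℕ) : ℕ := ∑ c : Composition n, c.blocks.prod

lemma headI_cons_tail' (l : List ℕ) (h : l ≠ []) : l.headI :: l.tail = l := by
  cases l with
  | nil => exact absurd rfl h
  | cons a t => rfl

lemma comp_blocks_ne_nil {n : ℕ} (hn : n ≠ 0) (c : Composition n) : c.blocks ≠ [] := by
  intro h
  have := c.blocks_sum
  rw [h] at this
  simp at this
  omega

/-- Prepend a part `1`. -/
def prependOne {n : ℕ} (c : Composition n) : Composition (n + 1) :=
  ⟨1 :: c.blocks, by
    intro i hi
    rcases List.mem_cons.1 hi with h | h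
    · omega
    · exact c.blocks_pos h, by simp [c.blocks_sum, Nat.add_comm]⟩

/-- Increase the first part by `1`. -/
def incFirst {n : ℕ} (hn : n ≠ 0) (c : Composition n) : Composition (n + 1) :=
  ⟨(c.blocks.headI + 1) :: c.blocks.tail, by
    intro i hi
    rcases List.mem_cons.1 hi with h | h
    · omega
    · exact c.blocks_pos (List.mem_of_mem_tail h), by
    have h1 : c.blocks.headI :: c.blocks.tail = c.blocks :=
      headI_cons_tail' _ (comp_blocks_ne_nil hn c)
    have h2 : (c.blocks.headI :: c.blocks.tail).sum = n := by rw [h1, c.blocks_sum]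
    simp only [List.sum_cons] at h2 ⊢
    omega⟩

def splitMap {n : ℕ} (hn : n ≠ 0) : Composition n ⊕ Composition n → Composition (n + 1)
  | Sum.inl c => prependOne c
  | Sum.inr c => incFirst hn c

lemma headI_pos {n : ℕ} (hn : n ≠ 0) (c : Composition n) : 0 < c.blocks.headI := by
  have h1 : c.blocks.headI :: c.blocks.tail = c.blocks :=
    headI_cons_tail' _ (comp_blocks_ne_nil hn c)
  exact c.blocks_pos (h1 ▸ List.mem_cons_self)

lemma splitMap_bij {n : ℕ} (hn : n ≠ 0) : Function.Bijective (splitMap hn) := by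
  constructor
  · rintro (c | c) (d | d) h <;>
      simp only [splitMap, prependOne, incFirst, Composition.ext_iff, List.cons.injEq] at h ⊢
    · exact congrArg Sum.inl (Composition.ext h.2)
    · have := headI_pos hn d; omega
    · have := headI_pos hn c; omega
    · refine congrArg Sum.inr (Composition.ext ?_)
      have hc : c.blocks.headI :: c.blocks.tail = c.blocks :=
        headI_cons_tail' _ (comp_blocks_ne_nil hn c)
      have hd : d.blocks.headI :: d.blocks.tail = d.blocks :=
        headI_cons_tail' _ (comp_blocks_ne_nil hn d)
      rw [← hc, ← hd, h.2]
      congr 1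
      omega
  · intro d
    obtain ⟨b, t, hbt⟩ : ∃ b t, d.blocks = b :: t := by
      rcases h : d.blocks with _ | ⟨b, t⟩
      · exact absurd h (comp_blocks_ne_nil (Nat.succ_ne_zero n) d)
      · exact ⟨b, t, rfl⟩
    have hbpos : 0 < b := d.blocks_pos (hbt ▸ List.mem_cons_self)
    have hsum : b + t.sum = n + 1 := by
      have := d.blocks_sum; rw [hbt] at this; simpa using this
    have htpos : ∀ i ∈ t, 0 < i := fun i hi =>
      d.blocks_pos (hbt ▸ List.mem_cons_of_mem _ hi)
    rcases eq_or_ne b 1 with rfl | hb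
    · refine ⟨Sum.inl ⟨t, fun {i} hi => htpos i hi, by omega⟩, ?_⟩
      simp only [splitMap, prependOne]
      exact (Composition.ext hbt.symm)
    · refine ⟨Sum.inr ⟨(b - 1) :: t, ?_, by simp; omega⟩, ?_⟩
      · intro i hi
        rcases List.mem_cons.1 hi with h | h
        · omega
        · exact htpos i h
      · simp only [splitMap, incFirst]
        apply Composition.ext
        simp only [List.headI, List.tail]
        rw [hbt]
        congr 1
        omega

lemma leftist_succ {n : ℕ} (hn : n ≠ 0) :
    leftist (n + 1) = totalProd n + leftist n := by
  rw [leftist, ← Fintype.sum_bijective _ (splitMap_bij hn)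
    (fun x => ((splitMap hn x).blocks.tail.prod)) _ (fun x => rfl),
    Fintype.sum_sum_type]
  have e1 : ∀ c : Composition n,
      (splitMap hn (Sum.inl c)).blocks.tail.prod = c.blocks.prod := by
    intro c; simp [splitMap, prependOne]
  have e2 : ∀ c : Composition n,
      (splitMap hn (Sum.inr c)).blocks.tail.prod = c.blocks.tail.prod := by
    intro c; simp [splitMap, incFirst]
  rw [Finset.sum_congr rfl fun c _ => e1 c, Finset.sum_congr rfl fun c _ => e2 c]
  rfl

lemma totalProd_succ {n : ℕ} (hn : n ≠ 0) :
    totalProd (n + 1) = 2 * totalProd n + leftist n := by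
  rw [totalProd, ← Fintype.sum_bijective _ (splitMap_bij hn)
    (fun x => ((splitMap hn x).blocks.prod)) _ (fun x => rfl),
    Fintype.sum_sum_type]
  have e1 : ∀ c : Composition n,
      (splitMap hn (Sum.inl c)).blocks.prod = c.blocks.prod := by
    intro c; simp [splitMap, prependOne]
  have e2 : ∀ c : Composition n,
      (splitMap hn (Sum.inr c)).blocks.prod = c.blocks.prod + c.blocks.tail.prod := by
    intro c
    have hc : c.blocks.headI :: c.blocks.tail = c.blocks :=
      headI_cons_tail' _ (comp_blocks_ne_nil hn c)
    have hp : c.blocks.prod = c.blocks.headI * c.blocks.tail.prod := by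
      conv_lhs => rw [← hc]
      rw [List.prod_cons]
    simp only [splitMap, incFirst, List.prod_cons]
    rw [hp]
    ring
  rw [Finset.sum_congr rfl fun c _ => e1 c, Finset.sum_congr rfl fun c _ => e2 c,
    Finset.sum_add_distrib]
  simp only [totalProd, leftist]
  ring

instance : Unique (Composition 1) := by
  refine ⟨⟨Composition.ones 1⟩, fun c => ?_⟩
  show c = Composition.ones 1
  rw [Composition.eq_ones_iff_le_length]
  exact List.length_pos_iff.2 (comp_blocks_ne_nil one_ne_zero c)

lemma leftist_one : leftist 1 = 1 := by
  rw [leftist, Fintype.sum_unique]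
  rfl

lemma totalProd_one : totalProd 1 = 1 := by
  rw [totalProd, Fintype.sum_unique]
  rfl

lemma fib_even_iff' : ∀ m : ℕ, Even (Nat.fib m) ↔ 3 ∣ m := by
  intro m
  induction m using Nat.strong_induction_on with
  | _ m ih =>
    match m with
    | 0 => simp
    | 1 => simp
    | 2 => simp
    | (k + 3) =>
      have h1 : Nat.fib (k + 3) = 2 * Nat.fib (k + 1) + Nat.fib k := by
        rw [show k + 3 = (k + 1) + 2 from rfl, Nat.fib_add_two, Nat.fib_add_two]
        ring
      have h2 := ih k (by omega)
      rw [h1]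
      constructor
      · intro h
        have : Even (Nat.fib k) := by
          rcases h with ⟨r, hr⟩
          exact ⟨r - Nat.fib (k + 1), by omega⟩
        have := h2.1 this
        omega
      · intro h
        have h3 : 3 ∣ k := by omega
        rcases h2.2 h3 with ⟨r, hr⟩
        exact ⟨Nat.fib (k + 1) + r, by omega⟩

lemma leftist_total_fib : ∀ n : ℕ, 1 ≤ n →
    leftist n = Nat.fib (2 * n - 1) ∧ totalProd n = Nat.fib (2 * n) := by
  intro n hn
  induction n with
  | zero => omega
  | succ m ih =>
    rcases Nat.eq_or_lt_of_le hn with h | h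
    · have : m = 0 := by omega
      subst this
      exact ⟨leftist_one, by simpa using totalProd_one⟩
    · have hm : 1 ≤ m := by omega
      obtain ⟨hl, ht⟩ := ih hm
      have hm0 : m ≠ 0 := by omega
      constructor
      · rw [leftist_succ hm0, hl, ht]
        have h1 : 2 * (m + 1) - 1 = (2 * m - 1) + 2 := by omega
        rw [h1, Nat.fib_add_two]
        have h2 : 2 * m - 1 + 1 = 2 * m := by omega
        rw [h2]
        omega
      · rw [totalProd_succ hm0, hl, ht]
        have h1 : 2 * (m + 1) = (2 * m - 1) + 3 := by omega
        have h3 : Nat.fib ((2 * m - 1) + 3) = 2 * Nat.fib (2 * m - 1 + 1) + Nat.fib (2 * m - 1) := by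
          rw [show (2 * m - 1) + 3 = (2 * m - 1 + 1) + 2 from rfl, Nat.fib_add_two,
            Nat.fib_add_two]
          ring
        rw [h1, h3, show 2 * m - 1 + 1 = 2 * m by omega]

/-- `leftist n = F_{2n-1}` (Fibonacci, `F₁ = F₂ = 1`), and consequently
`leftist n` is even if and only if `2n ≡ 1 (mod 3)`. -/
theorem leftist_fib_parity :
    ∀ n : ℕ, 1 ≤ n →
      leftist n = Nat.fib (2 * n - 1) ∧ (Even (leftist n) ↔ 2 * n % 3 = 1) := by
  intro n hn
  obtain ⟨hl, -⟩ := leftist_total_fib n hn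
  refine ⟨hl, ?_⟩
  rw [hl, fib_even_iff']
  omega
end

section
/- Define a(n) as the number of horizontally convex polyominoes of area n (a(n) = Σ_{(a_1,...,a_r)⊨n} ∏_{i<r}(a_i+a_{i+1}-1)). Then a(n) grows like the largest root of x^3 = 5x^2 - 7x + 4; in particular, for all n ≥ 1, 2^n ≤ a(n+2) (a suitable explicit exponential lower bound), and a(n) ≤ 5^n. -/
/-- `adjWt` : `∏ (aᵢ + aᵢ₊₁ - 1)` over adjacent parts. -/
def adjWt (l : List ℕ) : ℕ := ((l.zip l.tail).map fun p => p.1 + p.2 - 1).prod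

/-- `vcp n` = number of horizontally convex polyominoes of area `n`. -/
def vcp (n : ℕ) : ℕ := ∑ c : Composition n, adjWt c.blocks

lemma one_le_adjWt {l : List ℕ} (h : ∀ x ∈ l, 1 ≤ x) : 1 ≤ adjWt l := by
  apply Nat.one_le_iff_ne_zero.mpr
  apply Nat.pos_iff_ne_zero.mp
  apply List.prod_pos
  intro a ha
  simp only [List.mem_map] at ha
  obtain ⟨⟨x, y⟩, hp, rfl⟩ := ha
  obtain ⟨h1, h2⟩ := List.of_mem_zip hp
  have hx := h _ h1
  have hy := h _ (List.mem_of_mem_tail h2)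
  simp only
  omega

lemma adjWt_key : ∀ (t : List ℕ) (a : ℕ), 1 ≤ a → (∀ x ∈ t, 1 ≤ x) →
    adjWt (a :: t) * 2 ^ a * 2 ^ ((a :: t).getLast (List.cons_ne_nil a t)) * 4 ^ t.length
      ≤ 4 ^ (a + t.sum) := by
  intro t
  induction t with
  | nil =>
    intro a ha _
    simp only [adjWt, List.zip, List.tail, List.zipWith, List.map_nil, List.prod_nil,
      List.getLast_singleton, List.length_nil, pow_zero, mul_one, one_mul, List.sum_nil,
      Nat.add_zero]
    rw [show (4:ℕ) = 2*2 from rfl, mul_pow]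
  | cons b t' ih =>
    intro a ha hmem
    have hb : 1 ≤ b := hmem b (by simp)
    have hadj : adjWt (a :: b :: t') = (a + b - 1) * adjWt (b :: t') := by
      simp [adjWt]
    have hlast : (a :: b :: t').getLast (List.cons_ne_nil _ _)
        = (b :: t').getLast (List.cons_ne_nil _ _) := by
      rw [List.getLast_cons]
    set L := (b :: t').getLast (List.cons_ne_nil _ _) with hL
    have IH := ih b hb (fun x hx => hmem x (by simp [hx]))
    have hpow : a + b - 1 ≤ 2 ^ (a + b - 2) := by
      have := Nat.lt_two_pow_self (n := a + b - 2)
      omega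
    have key2 : (a + b - 1) * 2 ^ (a + 2) ≤ 4 ^ a * 2 ^ b := by
      have e1 : (4:ℕ) ^ a * 2 ^ b = 2 ^ (2 * a + b) := by
        rw [show (4:ℕ) = 2^2 from rfl, ← pow_mul, ← pow_add]
      have e2 : a + b - 2 + (a + 2) = 2 * a + b := by omega
      calc (a + b - 1) * 2 ^ (a + 2) ≤ 2 ^ (a + b - 2) * 2 ^ (a + 2) :=
            Nat.mul_le_mul_right _ hpow
        _ = 2 ^ (2 * a + b) := by rw [← pow_add, e2]
        _ = 4 ^ a * 2 ^ b := e1.symm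
    have goal2 : adjWt (a :: b :: t') * 2 ^ a * 2 ^ L * 4 ^ (b :: t').length * 2 ^ b
        ≤ 4 ^ (a + (b :: t').sum) * 2 ^ b := by
      have expand : adjWt (a :: b :: t') * 2 ^ a * 2 ^ L * 4 ^ (b :: t').length * 2 ^ b
          = ((a + b - 1) * 2 ^ (a + 2)) * (adjWt (b :: t') * 2 ^ b * 2 ^ L * 4 ^ t'.length) := by
        rw [hadj, List.length_cons, pow_succ, pow_add]
        ring
      rw [expand]
      calc ((a + b - 1) * 2 ^ (a + 2)) * (adjWt (b :: t') * 2 ^ b * 2 ^ L * 4 ^ t'.length)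
          ≤ ((a + b - 1) * 2 ^ (a + 2)) * 4 ^ (b + t'.sum) := Nat.mul_le_mul_left _ IH
        _ ≤ (4 ^ a * 2 ^ b) * 4 ^ (b + t'.sum) := Nat.mul_le_mul_right _ key2
        _ = 4 ^ (a + (b :: t').sum) * 2 ^ b := by
            rw [List.sum_cons, pow_add, pow_add]
            ring
    rw [hlast]
    exact Nat.le_of_mul_le_mul_right goal2 (Nat.pow_pos (n := b) (by norm_num))

lemma adjWt_le_pow {n : ℕ} (c : Composition n) : adjWt c.blocks ≤ 4 ^ (n - c.length) := by
  rcases hb : c.blocks with _ | ⟨a, t⟩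
  · have h1 : adjWt ([] : List ℕ) = 1 := by simp [adjWt]
    rw [h1]
    exact Nat.one_le_pow _ _ (by norm_num)
  · have ha : 1 ≤ a := c.blocks_pos (by rw [hb]; simp)
    have hmem : ∀ x ∈ t, 1 ≤ x := fun x hx => c.blocks_pos (by rw [hb]; simp [hx])
    have key := adjWt_key t a ha hmem
    have hsum : a + t.sum = n := by
      have := c.blocks_sum; rw [hb] at this; simpa using this
    have hlen : c.length = t.length + 1 := by
      simp [Composition.length, hb]
    have hlelen : c.length ≤ n := c.length_le
    have h1 : adjWt (a :: t) * 4 ^ (t.length + 1) ≤ 4 ^ n := by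
      have h2a : (2:ℕ) ≤ 2 ^ a := by
        calc (2:ℕ) = 2^1 := rfl
          _ ≤ 2 ^ a := Nat.pow_le_pow_right (by norm_num) ha
      have h2L : (2:ℕ) ≤ 2 ^ ((a :: t).getLast (List.cons_ne_nil a t)) := by
        have hml : 1 ≤ (a :: t).getLast (List.cons_ne_nil a t) := by
          have := List.getLast_mem (List.cons_ne_nil a t)
          rcases List.mem_cons.mp this with h | h
          · omega
          · exact hmem _ h
        calc (2:ℕ) = 2^1 := rfl
          _ ≤ _ := Nat.pow_le_pow_right (by norm_num) hml
      calc adjWt (a :: t) * 4 ^ (t.length + 1)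
          = adjWt (a :: t) * 2 * 2 * 4 ^ t.length := by ring
        _ ≤ adjWt (a :: t) * 2 ^ a * 2 ^ ((a :: t).getLast (List.cons_ne_nil a t)) * 4 ^ t.length := by
            apply Nat.mul_le_mul_right
            apply Nat.mul_le_mul (Nat.mul_le_mul_left _ h2a) h2L
        _ ≤ 4 ^ (a + t.sum) := key
        _ = 4 ^ n := by rw [hsum]
    have h2 : adjWt (a :: t) * 4 ^ c.length ≤ 4 ^ (n - c.length) * 4 ^ c.length := by
      rw [← pow_add, Nat.sub_add_cancel hlelen, hlen]
      exact h1
    exact Nat.le_of_mul_le_mul_right h2 (Nat.pow_pos (by norm_num))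

lemma length_symm {n : ℕ} (hn : 1 ≤ n) (S : Finset (Fin (n - 1))) :
    ((compositionAsSetEquiv n).symm S).length = S.card + 1 := by
  have hb : ((compositionAsSetEquiv n).symm S).boundaries =
      insert (0 : Fin n.succ) (insert (Fin.last n)
        (S.image fun j : Fin (n - 1) => (Fin.mk ((j : ℕ) + 1) (by have := j.isLt; omega) : Fin n.succ))) := by
    ext i
    simp only [compositionAsSetEquiv, Equiv.coe_fn_symm_mk, Set.toFinset_setOf,
      Finset.mem_filter, Finset.mem_univ, true_and, Finset.mem_insert, Finset.mem_image]
    constructor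
    · rintro (rfl | rfl | ⟨j, hj, hij⟩)
      · exact Or.inl rfl
      · exact Or.inr (Or.inl rfl)
      · refine Or.inr (Or.inr ⟨j, hj, ?_⟩)
        rw [Fin.ext_iff, Fin.val_mk]
        omega
    · rintro (rfl | rfl | ⟨j, hj, rfl⟩)
      · exact Or.inl rfl
      · exact Or.inr (Or.inl rfl)
      · exact Or.inr (Or.inr ⟨j, hj, rfl⟩)
  have hcard : ((compositionAsSetEquiv n).symm S).boundaries.card = S.card + 2 := by
    rw [hb]
    rw [Finset.card_insert_of_notMem, Finset.card_insert_of_notMem,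
      Finset.card_image_of_injective]
    · intro j j' hjj'
      rw [Fin.ext_iff] at hjj' ⊢
      simp only at hjj'
      omega
    · intro hmem
      simp only [Finset.mem_image] at hmem
      obtain ⟨j, -, hj⟩ := hmem
      have hv := congrArg Fin.val hj
      simp only [Fin.val_mk, Fin.val_last] at hv
      have := j.isLt
      omega
    · intro hmem
      simp only [Finset.mem_insert, Finset.mem_image] at hmem
      rcases hmem with h | ⟨j, -, hj⟩
      · have hv := congrArg Fin.val h
        simp only [Fin.val_zero, Fin.val_last] at hv
        omega
      · have hv := congrArg Fin.val hj
        simp only [Fin.val_mk, Fin.val_zero] at hv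
        omega
  simp [CompositionAsSet.length, hcard]

lemma sum_pow_card (m : ℕ) : ∑ S : Finset (Fin m), 4 ^ (m - S.card) = 5 ^ m := by
  have h := Fintype.prod_add (fun _ : Fin m => (1 : ℕ)) (fun _ : Fin m => (4 : ℕ))
  simp only [Finset.prod_const_one, one_mul, Finset.prod_const] at h
  rw [show ((1:ℕ)+4) = 5 from rfl, Finset.card_univ, Fintype.card_fin] at h
  rw [h]
  apply Finset.sum_congr rfl
  intro S _
  rw [Finset.card_compl, Fintype.card_fin]

/-- Exponential bounds: `2ⁿ ≤ vcp (n+2)` for `n ≥ 1`, and `vcp n ≤ 5ⁿ`. -/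
theorem vcp_bounds :
    (∀ n : ℕ, 1 ≤ n → 2 ^ n ≤ vcp (n + 2)) ∧ ∀ n : ℕ, vcp n ≤ 5 ^ n := by
  constructor
  · intro n hn
    calc 2 ^ n ≤ 2 ^ (n + 1) := Nat.pow_le_pow_right (by norm_num) (Nat.le_succ n)
      _ = Fintype.card (Composition (n + 2)) := by
          rw [composition_card]
          norm_num
      _ = ∑ _c : Composition (n + 2), 1 := by
          rw [Fintype.card, Finset.card_eq_sum_ones]
      _ ≤ vcp (n + 2) := by
          apply Finset.sum_le_sum
          intro c _
          exact one_le_adjWt (fun x hx => c.blocks_pos hx)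
  · intro n
    rcases Nat.eq_zero_or_pos n with rfl | hn
    · calc vcp 0 ≤ ∑ _c : Composition 0, 1 := by
            apply Finset.sum_le_sum
            intro c _
            simpa using adjWt_le_pow c
        _ = Fintype.card (Composition 0) := by
            rw [Fintype.card, Finset.card_eq_sum_ones]
        _ = 1 := by rw [composition_card]; norm_num
        _ = 5 ^ 0 := by norm_num
    · calc vcp n ≤ ∑ c : Composition n, 4 ^ (n - c.length) :=
            Finset.sum_le_sum (fun c _ => adjWt_le_pow c)
        _ = ∑ d : CompositionAsSet n, 4 ^ (n - d.length) := by
            apply Fintype.sum_equiv (compositionEquiv n)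
            intro c
            simp [compositionEquiv]
        _ = ∑ S : Finset (Fin (n - 1)), 4 ^ (n - ((compositionAsSetEquiv n).symm S).length) :=
            (Equiv.sum_comp (compositionAsSetEquiv n).symm _).symm
        _ = ∑ S : Finset (Fin (n - 1)), 4 ^ ((n - 1) - S.card) := by
            apply Finset.sum_congr rfl
            intro S _
            rw [length_symm hn]
            congr 1
            omega
        _ = 5 ^ (n - 1) := sum_pow_card _
        _ ≤ 5 ^ n := Nat.pow_le_pow_right (by norm_num) (Nat.sub_le n 1)
end
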